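/- arXiv:1601.02760 — 3 statements merged into one kernel-verified Lean document; each statement's English description precedes it below -/
import Mathlib

section
/- For every graph G, the zero forcing number satisfies Z(G) ≤ T⁺(G). -/
open SimpleGraph

/-- The set `W` induces a path in `G`. -/
def InducesPath {V : Type*} (G : SimpleGraph V) (W : Set V) : Prop :=
  ∃ n : ℕ, Nonempty ((G.induce W) ≃g SimpleGraph.pathGraph n)

/-- The set `U` is covered by `p` vertex-disjoint induced paths of `G`. -/
def IsPathCoverOn {V : Type*} (G : SimpleGraph V) (U : Set V) (p : ℕ) : Prop :=
  ∃ parts : Fin p → Set V,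
    (∀ i, (parts i).Nonempty) ∧
    (Pairwise fun i j => Disjoint (parts i) (parts j)) ∧
    (⋃ i, parts i) = U ∧
    ∀ i, InducesPath G (parts i)

/-- The induced subgraph of `G` on `U` is a vertex-disjoint union of `p` paths. -/
def IsDisjointPathsOn {V : Type*} (G : SimpleGraph V) (U : Set V) (p : ℕ) : Prop :=
  ∃ parts : Fin p → Set V,
    (∀ i, (parts i).Nonempty) ∧
    (Pairwise fun i j => Disjoint (parts i) (parts j)) ∧
    (⋃ i, parts i) = U ∧
    (∀ i, InducesPath G (parts i)) ∧
    (∀ i j, i ≠ j → ∀ u ∈ parts i, ∀ v ∈ parts j, ¬ G.Adj u v)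

/-- The path cover number `P(G)`. -/
noncomputable def pathCoverNumber {V : Type*} (G : SimpleGraph V) : ℕ :=
  sInf {p | IsPathCoverOn G Set.univ p}

/-- `Δ(G)`: max of `p - q` over deletions of `q` vertices leaving `p` disjoint paths. -/
noncomputable def deltaLow {V : Type*} [Fintype V] (G : SimpleGraph V) : ℤ :=
  sSup {d : ℤ | ∃ (S : Finset V) (p : ℕ),
    IsDisjointPathsOn G ((↑S : Set V)ᶜ) p ∧ d = (p : ℤ) - S.card}

/-- `Δ⁺(G)`: min of `p + q` over deletions of `q` vertices leaving `p` disjoint paths. -/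
noncomputable def deltaPlus {V : Type*} [Fintype V] (G : SimpleGraph V) : ℕ :=
  sInf {k | ∃ (S : Finset V) (p : ℕ),
    IsDisjointPathsOn G ((↑S : Set V)ᶜ) p ∧ k = p + S.card}

/-- `T⁻(G)`. -/
noncomputable def Tminus {V : Type*} [Fintype V] (G : SimpleGraph V) : ℤ :=
  sSup {d : ℤ | ∃ S : Finset V, (G.induce ((↑S : Set V)ᶜ)).IsAcyclic ∧
    d = (pathCoverNumber (G.induce ((↑S : Set V)ᶜ)) : ℤ) - S.card}

/-- `T⁺(G)`. -/
noncomputable def Tplus {V : Type*} [Fintype V] (G : SimpleGraph V) : ℕ :=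
  sInf {k | ∃ S : Finset V, (G.induce ((↑S : Set V)ᶜ)).IsAcyclic ∧
    k = pathCoverNumber (G.induce ((↑S : Set V)ᶜ)) + S.card}

/-- `A` is a symmetric real matrix whose graph is `G`, i.e. `A ∈ S(G)`. -/
def MatchesGraph {V : Type*} [Fintype V] (G : SimpleGraph V) (A : Matrix V V ℝ) : Prop :=
  A.IsSymm ∧ ∀ i j : V, i ≠ j → (A i j ≠ 0 ↔ G.Adj i j)

/-- The nullity of a square real matrix. -/
noncomputable def matNullity {V : Type*} [Fintype V] (A : Matrix V V ℝ) : ℕ :=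
  Module.finrank ℝ (LinearMap.ker A.mulVecLin)

/-- `M(G)`: the maximum nullity (= maximum eigenvalue multiplicity). -/
noncomputable def maxNullity {V : Type*} [Fintype V] [DecidableEq V] (G : SimpleGraph V) : ℕ :=
  sSup {k | ∃ A : Matrix V V ℝ, MatchesGraph G A ∧ matNullity A = k}

/-- `mr(G)`: the minimum rank. -/
noncomputable def minRank {V : Type*} [Fintype V] [DecidableEq V] (G : SimpleGraph V) : ℕ :=
  sInf {k | ∃ A : Matrix V V ℝ, MatchesGraph G A ∧ A.rank = k}

/-- Vertices colored by the zero forcing process started from `B`. -/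
inductive ZFClosed {V : Type*} (G : SimpleGraph V) (B : Set V) : V → Prop
  | init (v : V) (h : v ∈ B) : ZFClosed G B v
  | force (u v : V) (hu : ZFClosed G B u) (huv : G.Adj u v)
      (hforce : ∀ w, G.Adj u w → w ≠ v → ZFClosed G B w) : ZFClosed G B v

/-- `B` is a zero forcing set of `G`. -/
def IsZeroForcingSet {V : Type*} (G : SimpleGraph V) (B : Set V) : Prop :=
  ∀ v, ZFClosed G B v

/-- `Z(G)`: the zero forcing number. -/
noncomputable def zeroForcingNumber {V : Type*} [Fintype V] (G : SimpleGraph V) : ℕ :=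
  sInf {k | ∃ B : Finset V, IsZeroForcingSet G ↑B ∧ B.card = k}

/-- The star graph on `Fin n`: vertex `0` adjacent to all others. -/
def starGraph (n : ℕ) : SimpleGraph (Fin n) :=
  SimpleGraph.fromRel (fun i _ => i.val = 0)

/-- The wheel graph: a hub (`none`) joined to every vertex of a cycle on `Fin m`. -/
def wheelGraph (m : ℕ) : SimpleGraph (Option (Fin m)) :=
  SimpleGraph.fromRel (fun u v =>
    match u, v with
    | none, some _ => True
    | some i, some j => j.val = (i.val + 1) % m
    | _, _ => False)

/-- The `n`-sun: a cycle on `Fin n` (the `inl` vertices) with a pendant vertex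
(`inr i`) attached to each cycle vertex (`inl i`). -/
def sunGraph (n : ℕ) : SimpleGraph (Fin n ⊕ Fin n) :=
  SimpleGraph.fromRel (fun u v =>
    match u, v with
    | .inl i, .inl j => j.val = (i.val + 1) % n
    | .inl i, .inr j => i = j
    | _, _ => False)


universe u

inductive ZFA {V : Type u} (G : SimpleGraph V) (A B : Set V) : V → Prop
  | init (v : V) (h : v ∈ B) : ZFA G A B v
  | force (u v : V) (hu : ZFA G A B u) (hA : u ∈ A) (huv : G.Adj u v)
      (hforce : ∀ w, G.Adj u w → w ≠ v → ZFA G A B w) : ZFA G A B v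

lemma ZFA.toZFClosed {V : Type u} {G : SimpleGraph V} {A B : Set V} {v : V}
    (h : ZFA G A B v) : ZFClosed G B v := by
  induction h with
  | init v h => exact ZFClosed.init v h
  | force u v hu hA huv hforce ihu ihf => exact ZFClosed.force u v ihu huv ihf

lemma ZFClosed.mono {V : Type u} {G : SimpleGraph V} {B B' : Set V} (hBB : B ⊆ B') {v : V}
    (h : ZFClosed G B v) : ZFClosed G B' v := by
  induction h with
  | init v h => exact ZFClosed.init v (hBB h)
  | force u v hu huv hforce ihu ihf => exact ZFClosed.force u v ihu huv ihf

lemma ZFA.lift {V : Type u} {F : SimpleGraph V} {v₀ : V} {A B : Set V}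
    {A' B' : Set {w : V // w ≠ v₀}}
    (hB : ∀ b : {w : V // w ≠ v₀}, b ∈ B' → ZFA F A B b.1)
    (hA : ∀ z : {w : V // w ≠ v₀}, z ∈ A' → z.1 ∈ A)
    (hv : ∀ z : {w : V // w ≠ v₀}, z ∈ A' → F.Adj z.1 v₀ → ZFA F A B v₀) :
    ∀ w, ZFA (F.comap Subtype.val) A' B' w → ZFA F A B w.1 := by
  intro w hw
  induction hw with
  | init w h => exact hB w h
  | force z w hz hzA hzw hforce ihz ihf =>
    refine ZFA.force z.1 w.1 ihz (hA z hzA) hzw ?_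
    intro x hx hxw
    by_cases hx0 : x = v₀
    · exact hx0 ▸ hv z hzA (hx0 ▸ hx)
    · exact ihf ⟨x, hx0⟩ hx (fun h => hxw (congrArg Subtype.val h))

lemma SimpleGraph.IsAcyclic.comap' {V W : Type*} {F : SimpleGraph W} (hF : F.IsAcyclic) (f : V → W)
    (hf : Function.Injective f) : (F.comap f).IsAcyclic := by
  intro v c hc
  let hom : F.comap f →g F := ⟨f, fun h => h⟩
  exact hF (c.map hom) (hc.map (f := hom) hf)

structure PathDecomp {V : Type u} (F : SimpleGraph V) (p : ℕ) where
  m : Fin p → ℕ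
  hm : ∀ i, 0 < m i
  σ : (i : Fin p) → Fin (m i) → V
  inj : ∀ i, Function.Injective (σ i)
  cover : ∀ v : V, ∃ i k, σ i k = v
  disjIdx : ∀ i j k l, σ i k = σ j l → i = j
  adjIff : ∀ i (k l : Fin (m i)), F.Adj (σ i k) (σ i l) ↔ ((k:ℕ) + 1 = (l:ℕ) ∨ (l:ℕ) + 1 = (k:ℕ))

def PathDecomp.start {V : Type u} {F : SimpleGraph V} {p : ℕ} (D : PathDecomp F p) : Set V :=
  {v | ∃ i, D.σ i ⟨0, D.hm i⟩ = v}

def PathDecomp.allowed {V : Type u} {F : SimpleGraph V} {p : ℕ} (D : PathDecomp F p) : Set V :=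
  {v | ∃ (i : Fin p) (k : Fin (D.m i)), ((k:ℕ) + 1 < D.m i) ∧ D.σ i k = v}

lemma adj_start_unique {V : Type u} {F : SimpleGraph V} {a c : V} (r : F.Walk a c) :
    r.IsPath → ∀ x y : V, s(a,x) ∈ r.edges → s(a,y) ∈ r.edges → x = y := by
  induction r with
  | nil => intro _ x y hx; simp at hx
  | @cons u b c' h r' ih =>
    intro hr x y hx hy
    rw [Walk.cons_isPath_iff] at hr
    have key : ∀ z, s(u,z) ∈ (Walk.cons h r').edges → z = b := by
      intro z hz
      rw [Walk.edges_cons, List.mem_cons] at hz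
      rcases hz with hz | hz
      · exact (Sym2.congr_right).mp hz
      · exact absurd (r'.fst_mem_support_of_mem_edges hz) hr.2
    rw [key x hx, key y hy]

lemma exists_leaf {V : Type u} [Fintype V] [Nonempty V] {F : SimpleGraph V} (hF : F.IsAcyclic) :
    ∃ v : V, ∀ w₁ w₂ : V, F.Adj v w₁ → F.Adj v w₂ → w₁ = w₂ := by
  classical
  set L : Set ℕ := {n | ∃ (u v : V) (q : F.Walk u v), q.IsPath ∧ q.length = n} with hL
  have hne : L.Nonempty :=
    ⟨0, Classical.arbitrary V, Classical.arbitrary V, Walk.nil, Walk.IsPath.nil, rfl⟩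
  have hbdd : BddAbove L := ⟨Fintype.card V, by rintro n ⟨u, v, q, hq, rfl⟩; exact hq.length_lt.le⟩
  obtain ⟨u, v, q, hq, hlen⟩ := Nat.sSup_mem hne hbdd
  refine ⟨v, fun w₁ w₂ h₁ h₂ => by_contra fun hne' => ?_⟩
  have key : ∀ w, F.Adj v w → s(v,w) ∉ q.edges → False := by
    intro w hadj hnotedge
    by_cases hsup : w ∈ q.support
    · have hr : (q.dropUntil w hsup).IsPath := hq.dropUntil hsup
      have hne2 : s(v,w) ∉ (q.dropUntil w hsup).edges :=
        fun h => hnotedge (q.edges_dropUntil_subset hsup h)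
      exact hF (Walk.cons hadj (q.dropUntil w hsup))
        ((Walk.cons_isCycle_iff _ hadj).2 ⟨hr, hne2⟩)
    · have hmem : q.length + 1 ∈ L := by
        refine ⟨w, u, Walk.cons hadj.symm q.reverse, ?_, by simp⟩
        rw [Walk.cons_isPath_iff]
        refine ⟨hq.reverse, ?_⟩
        rwa [Walk.support_reverse, List.mem_reverse]
      have := le_csSup hbdd hmem
      omega
  have e₁ : s(v,w₁) ∈ q.edges := by_contra fun h => key w₁ h₁ h
  have e₂ : s(v,w₂) ∈ q.edges := by_contra fun h => key w₂ h₂ h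
  exact hne' (adj_start_unique q.reverse hq.reverse w₁ w₂
    (by rwa [Walk.edges_reverse, List.mem_reverse])
    (by rwa [Walk.edges_reverse, List.mem_reverse]))


set_option maxHeartbeats 1000000 in
lemma core (n : ℕ) : ∀ {V : Type u} [Fintype V] (F : SimpleGraph V),
    Fintype.card V ≤ n → F.IsAcyclic →
    ∀ (p : ℕ) (D : PathDecomp F p) (v : V), ZFA F D.allowed D.start v := by
  induction n with
  | zero =>
    intro V _ F hcard _ p D v
    exact ((Fintype.card_eq_zero_iff.mp (Nat.le_zero.mp hcard)).false v).elim
  | succ n ih =>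
    intro V _ F hcard hF p D v
    classical
    haveI : Nonempty V := ⟨v⟩
    obtain ⟨v₀, hleaf⟩ := exists_leaf hF
    obtain ⟨i₀, k₀, hv₀⟩ := D.cover v₀
    haveI : Fintype {w : V // w ≠ v₀} := Fintype.ofFinite _
    have hcard' : Fintype.card {w : V // w ≠ v₀} ≤ n := by
      have : Fintype.card {w : V // w ≠ v₀} < Fintype.card V :=
        Fintype.card_lt_of_injective_of_notMem Subtype.val Subtype.val_injective
          (b := v₀) (by rintro ⟨a, ha⟩; exact a.2 ha)
      omega
    have hF' : (F.comap (Subtype.val : {w : V // w ≠ v₀} → V)).IsAcyclic :=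
      hF.comap' _ Subtype.val_injective
    have hk₀ : (k₀ : ℕ) = 0 ∨ (k₀ : ℕ) + 1 = D.m i₀ := by
      by_contra hcon
      push_neg at hcon
      have hk1 : 1 ≤ (k₀ : ℕ) := Nat.one_le_iff_ne_zero.mpr hcon.1
      have hk2 : (k₀ : ℕ) + 1 < D.m i₀ := lt_of_le_of_ne k₀.2 hcon.2
      have hk3 : (k₀ : ℕ) - 1 < D.m i₀ := by omega
      rw [← hv₀] at hleaf
      have a1 : F.Adj (D.σ i₀ k₀) (D.σ i₀ ⟨(k₀:ℕ) - 1, hk3⟩) :=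
        (D.adjIff i₀ k₀ _).mpr (Or.inr (by show (k₀:ℕ) - 1 + 1 = (k₀:ℕ); omega))
      have a2 : F.Adj (D.σ i₀ k₀) (D.σ i₀ ⟨(k₀:ℕ) + 1, hk2⟩) :=
        (D.adjIff i₀ k₀ _).mpr (Or.inl rfl)
      have heq := congrArg Fin.val (D.inj i₀ (hleaf _ _ a1 a2))
      simp only [Fin.val_mk] at heq
      omega
    by_cases hm1 : D.m i₀ = 1
    · -- Case A : singleton part
      have hv₀0 : D.σ i₀ ⟨0, D.hm i₀⟩ = v₀ := by
        rw [← hv₀]; congr 1; exact Fin.ext (by have := k₀.2; omega)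
      have hv₀start : v₀ ∈ D.start := ⟨i₀, hv₀0⟩
      rcases p with _ | p'
      · exact i₀.elim0
      have hne' : ∀ (j : Fin p') (k : Fin (D.m (i₀.succAbove j))),
          D.σ (i₀.succAbove j) k ≠ v₀ := by
        intro j k h
        exact Fin.succAbove_ne i₀ j (D.disjIdx _ _ _ _ (h.trans hv₀0.symm))
      let D' : PathDecomp (F.comap (Subtype.val : {w : V // w ≠ v₀} → V)) p' :=
      { m := fun j => D.m (i₀.succAbove j)
        hm := fun j => D.hm _
        σ := fun j k => ⟨D.σ (i₀.succAbove j) k, hne' j k⟩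
        inj := fun j k l h => D.inj _ (congrArg Subtype.val h)
        cover := by
          rintro ⟨w, hw⟩
          obtain ⟨i, k, hik⟩ := D.cover w
          have hi : i ≠ i₀ := by
            rintro rfl
            apply hw
            rw [← hik, ← hv₀0]
            congr 1
            exact Fin.ext (by have := k.2; omega)
          obtain ⟨j, hj⟩ := Fin.exists_succAbove_eq hi
          subst hj
          exact ⟨j, k, Subtype.ext hik⟩
        disjIdx := fun j j' k l h =>
          Fin.succAbove_right_injective (D.disjIdx _ _ _ _ (congrArg Subtype.val h))
        adjIff := fun j k l => D.adjIff _ k l }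
      have hall := ih (F.comap (Subtype.val : {w : V // w ≠ v₀} → V)) hcard' hF' p' D'
      have hlift := ZFA.lift (F := F) (v₀ := v₀) (A := D.allowed) (B := D.start)
        (A' := D'.allowed) (B' := D'.start)
        (by rintro b ⟨j, hj⟩
            rw [← hj]
            exact ZFA.init _ ⟨i₀.succAbove j, rfl⟩)
        (by rintro z ⟨j, k, hk, rfl⟩
            exact ⟨i₀.succAbove j, k, hk, rfl⟩)
        (fun z _ _ => ZFA.init v₀ hv₀start)
      by_cases hvv : v = v₀
      · exact hvv ▸ ZFA.init v₀ hv₀start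
      · exact hlift ⟨v, hvv⟩ (hall ⟨v, hvv⟩)
    · have hm2 : 2 ≤ D.m i₀ := by have := D.hm i₀; omega
      set δ : Fin p → ℕ := (fun j => if j = i₀ then 1 else 0) with hδdef
      have hδ1 : δ i₀ = 1 := if_pos rfl
      have hδ0 : ∀ j, j ≠ i₀ → δ j = 0 := fun j h => if_neg h
      have hδle : ∀ j, δ j ≤ 1 := by
        intro j
        by_cases h : j = i₀
        · rw [hδdef]; simp [h]
        · rw [hδ0 j h]; omega
      rcases hk₀ with hk0 | hkm
      · -- Case B : chosen end of the path is the leaf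
        have hv₀0 : D.σ i₀ ⟨0, D.hm i₀⟩ = v₀ := by
          rw [← hv₀]; congr 1; exact Fin.ext hk0.symm
        have hv₀start : v₀ ∈ D.start := ⟨i₀, hv₀0⟩
        have hv₀allowed : v₀ ∈ D.allowed :=
          ⟨i₀, ⟨0, D.hm i₀⟩, by show 0 + 1 < D.m i₀; omega, hv₀0⟩
        have h1lt : 1 < D.m i₀ := by omega
        have hadjnxt : F.Adj v₀ (D.σ i₀ ⟨1, h1lt⟩) := by
          rw [← hv₀0]
          exact (D.adjIff _ _ _).mpr (Or.inl rfl)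
        have hstep : ZFA F D.allowed D.start (D.σ i₀ ⟨1, h1lt⟩) :=
          ZFA.force v₀ _ (ZFA.init _ hv₀start) hv₀allowed hadjnxt
            (fun w hw hwne => absurd (hleaf w _ hw hadjnxt) hwne)
        have hbound : ∀ (j : Fin p) (kv : ℕ), kv < D.m j - δ j → kv + δ j < D.m j := by
          intro j kv hk
          have := hδle j
          omega
        have hne' : ∀ (j : Fin p) (kv : ℕ) (hkv : kv < D.m j - δ j),
            D.σ j ⟨kv + δ j, hbound j kv hkv⟩ ≠ v₀ := by
          intro j kv hkv h
          have hj : j = i₀ := D.disjIdx _ _ _ _ (h.trans hv₀.symm)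
          subst hj
          have hval := congrArg Fin.val (D.inj j (h.trans hv₀.symm))
          simp only [Fin.val_mk] at hval
          rw [hδ1] at hval
          omega
        let D' : PathDecomp (F.comap (Subtype.val : {w : V // w ≠ v₀} → V)) p :=
        { m := fun j => D.m j - δ j
          hm := by
            intro j
            show 0 < D.m j - δ j
            by_cases h : j = i₀
            · subst h; rw [hδ1]; omega
            · rw [hδ0 j h]; have := D.hm j; omega
          σ := fun j k => ⟨D.σ j ⟨(k:ℕ) + δ j, hbound j (k:ℕ) k.2⟩, hne' j (k:ℕ) k.2⟩
          inj := by
            intro j k l h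
            have hval := congrArg Fin.val (D.inj j (congrArg Subtype.val h))
            simp only [Fin.val_mk] at hval
            exact Fin.ext (by omega)
          cover := by
            rintro ⟨w, hw⟩
            obtain ⟨i, k, hik⟩ := D.cover w
            by_cases h : i = i₀
            · subst h
              have hknz : (k:ℕ) ≠ 0 := by
                intro h0
                apply hw
                rw [← hik, ← hv₀0]
                congr 1
                exact Fin.ext h0
              have hklt : (k:ℕ) - 1 < D.m i - δ i := by rw [hδ1]; have := k.2; omega
              refine ⟨i, ⟨(k:ℕ) - 1, hklt⟩, Subtype.ext ?_⟩
              show D.σ i ⟨(k:ℕ) - 1 + δ i, _⟩ = w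
              rw [← hik]
              congr 1
              refine Fin.ext ?_
              show (k:ℕ) - 1 + δ i = (k:ℕ)
              rw [hδ1]; omega
            · have hklt : (k:ℕ) < D.m i - δ i := by rw [hδ0 i h]; have := k.2; omega
              refine ⟨i, ⟨(k:ℕ), hklt⟩, Subtype.ext ?_⟩
              show D.σ i ⟨(k:ℕ) + δ i, _⟩ = w
              rw [← hik]
              congr 1
              refine Fin.ext ?_
              show (k:ℕ) + δ i = (k:ℕ)
              rw [hδ0 i h]
              omega
          disjIdx := fun j j' k l h => D.disjIdx _ _ _ _ (congrArg Subtype.val h)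
          adjIff := by
            intro j k l
            have base := D.adjIff j ⟨(k:ℕ) + δ j, hbound j (k:ℕ) k.2⟩
              ⟨(l:ℕ) + δ j, hbound j (l:ℕ) l.2⟩
            simp only [Fin.val_mk] at base
            exact base.trans (by omega) }
        have hall := ih (F.comap (Subtype.val : {w : V // w ≠ v₀} → V)) hcard' hF' p D'
        have hlift := ZFA.lift (F := F) (v₀ := v₀) (A := D.allowed) (B := D.start)
          (A' := D'.allowed) (B' := D'.start)
          (by rintro b ⟨j, hj⟩
              rw [← hj]
              by_cases h : j = i₀
              · subst h
                have hval : (D'.σ j ⟨0, D'.hm j⟩).1 = D.σ j ⟨1, h1lt⟩ := by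
                  show D.σ j ⟨0 + δ j, _⟩ = D.σ j ⟨1, h1lt⟩
                  congr 1
                  refine Fin.ext ?_
                  show 0 + δ j = 1
                  rw [hδ1]
                rw [hval]
                exact hstep
              · refine ZFA.init _ ⟨j, ?_⟩
                show D.σ j ⟨0, D.hm j⟩ = (D'.σ j ⟨0, D'.hm j⟩).1
                show D.σ j ⟨0, D.hm j⟩ = D.σ j ⟨0 + δ j, _⟩
                congr 1
                refine Fin.ext ?_
                show (0:ℕ) = 0 + δ j
                rw [hδ0 j h])
          (by rintro z ⟨j, k, hk, rfl⟩
              refine ⟨j, ⟨(k:ℕ) + δ j, hbound j (k:ℕ) k.2⟩, ?_, rfl⟩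
              show (k:ℕ) + δ j + 1 < D.m j
              have hk' : (k:ℕ) + 1 < D.m j - δ j := hk
              have := hδle j
              omega)
          (fun z _ _ => ZFA.init v₀ hv₀start)
        by_cases hvv : v = v₀
        · exact hvv ▸ ZFA.init v₀ hv₀start
        · exact hlift ⟨v, hvv⟩ (hall ⟨v, hvv⟩)
      · -- Case C : far end of the path is the leaf
        have hprevlt : D.m i₀ - 2 < D.m i₀ := by omega
        have hadjprev : F.Adj v₀ (D.σ i₀ ⟨D.m i₀ - 2, hprevlt⟩) := by
          rw [← hv₀]
          exact (D.adjIff _ _ _).mpr (Or.inr (by show D.m i₀ - 2 + 1 = (k₀:ℕ); omega))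
        have huniq : ∀ w, F.Adj v₀ w → w = D.σ i₀ ⟨D.m i₀ - 2, hprevlt⟩ :=
          fun w hw => hleaf w _ hw hadjprev
        have hbound : ∀ (j : Fin p) (kv : ℕ), kv < D.m j - δ j → kv < D.m j := by
          intro j kv hk
          have := hδle j
          omega
        have hne' : ∀ (j : Fin p) (kv : ℕ) (hkv : kv < D.m j - δ j),
            D.σ j ⟨kv, hbound j kv hkv⟩ ≠ v₀ := by
          intro j kv hkv h
          have hj : j = i₀ := D.disjIdx _ _ _ _ (h.trans hv₀.symm)
          subst hj
          have hval := congrArg Fin.val (D.inj j (h.trans hv₀.symm))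
          simp only [Fin.val_mk] at hval
          rw [hδ1] at hkv
          omega
        let D' : PathDecomp (F.comap (Subtype.val : {w : V // w ≠ v₀} → V)) p :=
        { m := fun j => D.m j - δ j
          hm := by
            intro j
            show 0 < D.m j - δ j
            by_cases h : j = i₀
            · subst h; rw [hδ1]; omega
            · rw [hδ0 j h]; have := D.hm j; omega
          σ := fun j k => ⟨D.σ j ⟨(k:ℕ), hbound j (k:ℕ) k.2⟩, hne' j (k:ℕ) k.2⟩
          inj := by
            intro j k l h
            have hval := congrArg Fin.val (D.inj j (congrArg Subtype.val h))
            simp only [Fin.val_mk] at hval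
            exact Fin.ext hval
          cover := by
            rintro ⟨w, hw⟩
            obtain ⟨i, k, hik⟩ := D.cover w
            by_cases h : i = i₀
            · subst h
              have hkne : (k:ℕ) + 1 ≠ D.m i := by
                intro h0
                apply hw
                rw [← hik, ← hv₀]
                congr 1
                exact Fin.ext (by omega)
              have hklt : (k:ℕ) < D.m i - δ i := by rw [hδ1]; have := k.2; omega
              refine ⟨i, ⟨(k:ℕ), hklt⟩, Subtype.ext ?_⟩
              show D.σ i ⟨(k:ℕ), _⟩ = w
              rw [← hik]
            · have hklt : (k:ℕ) < D.m i - δ i := by rw [hδ0 i h]; have := k.2; omega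
              refine ⟨i, ⟨(k:ℕ), hklt⟩, Subtype.ext ?_⟩
              show D.σ i ⟨(k:ℕ), _⟩ = w
              rw [← hik]
          disjIdx := fun j j' k l h => D.disjIdx _ _ _ _ (congrArg Subtype.val h)
          adjIff := by
            intro j k l
            have base := D.adjIff j ⟨(k:ℕ), hbound j (k:ℕ) k.2⟩
              ⟨(l:ℕ), hbound j (l:ℕ) l.2⟩
            simp only [Fin.val_mk] at base
            exact base }
        have hall := ih (F.comap (Subtype.val : {w : V // w ≠ v₀} → V)) hcard' hF' p D'
        have hlift := ZFA.lift (F := F) (v₀ := v₀) (A := D.allowed) (B := D.start)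
          (A' := D'.allowed) (B' := D'.start)
          (by rintro b ⟨j, hj⟩
              rw [← hj]
              refine ZFA.init _ ⟨j, ?_⟩
              show D.σ j ⟨0, D.hm j⟩ = (D'.σ j ⟨0, D'.hm j⟩).1
              show D.σ j ⟨0, D.hm j⟩ = D.σ j ⟨(0:ℕ), _⟩
              congr 1)
          (by rintro z ⟨j, k, hk, rfl⟩
              refine ⟨j, ⟨(k:ℕ), hbound j (k:ℕ) k.2⟩, ?_, rfl⟩
              show (k:ℕ) + 1 < D.m j
              have hk' : (k:ℕ) + 1 < D.m j - δ j := hk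
              omega)
          (by rintro z ⟨j, k, hk, rfl⟩ hadj
              exfalso
              have hz : (D'.σ j k).1 = D.σ i₀ ⟨D.m i₀ - 2, hprevlt⟩ := huniq _ hadj.symm
              have hz' : D.σ j ⟨(k:ℕ), hbound j (k:ℕ) k.2⟩ = D.σ i₀ ⟨D.m i₀ - 2, hprevlt⟩ := hz
              have hj : j = i₀ := D.disjIdx _ _ _ _ hz'
              subst hj
              have hval := congrArg Fin.val (D.inj j hz')
              simp only [Fin.val_mk] at hval
              have hk' : (k:ℕ) + 1 < D.m j - δ j := hk
              rw [hδ1] at hk'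
              omega)
        have hcol : ∀ w : V, w ≠ v₀ → ZFA F D.allowed D.start w :=
          fun w hw => hlift ⟨w, hw⟩ (hall ⟨w, hw⟩)
        have hprevne : D.σ i₀ ⟨D.m i₀ - 2, hprevlt⟩ ≠ v₀ := by
          intro h
          have hval := congrArg Fin.val (D.inj i₀ (h.trans hv₀.symm))
          simp only [Fin.val_mk] at hval
          omega
        have hv₀c : ZFA F D.allowed D.start v₀ :=
          ZFA.force _ v₀ (hcol _ hprevne)
            ⟨i₀, ⟨D.m i₀ - 2, hprevlt⟩, by show D.m i₀ - 2 + 1 < D.m i₀; omega, rfl⟩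
            hadjprev.symm (fun w hw hwne => hcol w hwne)
        by_cases hvv : v = v₀
        · exact hvv ▸ hv₀c
        · exact hcol v hvv

lemma exists_decomp {V : Type u} (F : SimpleGraph V) {p : ℕ}
    (h : IsPathCoverOn F Set.univ p) : Nonempty (PathDecomp F p) := by
  obtain ⟨parts, hne, hdisj, hunion, hpath⟩ := h
  choose m hm using hpath
  have φ : ∀ i, (F.induce (parts i)) ≃g pathGraph (m i) := fun i => (hm i).some
  refine ⟨{ m := m
            hm := fun i => ?_
            σ := fun i k => ((φ i).symm k : ↥(parts i)).1
            inj := fun i k l hkl => ?_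
            cover := fun v => ?_
            disjIdx := fun i j k l hkl => ?_
            adjIff := fun i k l => ((φ i).symm.map_adj_iff).trans pathGraph_adj }⟩
  · obtain ⟨x, hx⟩ := hne i
    exact ((φ i).toEquiv ⟨x, hx⟩).pos
  · exact (φ i).symm.toEquiv.injective (Subtype.val_injective hkl)
  · have hv : v ∈ ⋃ i, parts i := by rw [hunion]; trivial
    obtain ⟨i, hi⟩ := Set.mem_iUnion.mp hv
    refine ⟨i, (φ i).toEquiv ⟨v, hi⟩, ?_⟩
    simp
  · by_contra hij
    have hkl' : ((φ i).symm k : ↥(parts i)).1 = ((φ j).symm l : ↥(parts j)).1 := hkl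
    have h1 : ((φ i).symm k : ↥(parts i)).1 ∈ parts i := ((φ i).symm k).2
    have h2 : ((φ j).symm l : ↥(parts j)).1 ∈ parts j := ((φ j).symm l).2
    rw [hkl'] at h1
    exact Set.disjoint_left.mp (hdisj hij) h1 h2

lemma pathcover_singletons {W : Type u} [Fintype W] (H : SimpleGraph W) :
    IsPathCoverOn H Set.univ (Fintype.card W) := by
  classical
  refine ⟨fun i => {(Fintype.equivFin W).symm i}, fun i => ⟨_, rfl⟩, ?_, ?_, ?_⟩
  · intro i j hij
    simp only [Set.disjoint_singleton_left, Set.mem_singleton_iff]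
    exact fun h => hij ((Fintype.equivFin W).symm.injective h)
  · ext w
    simp only [Set.mem_iUnion, Set.mem_singleton_iff, Set.mem_univ, iff_true]
    exact ⟨Fintype.equivFin W w, by simp⟩
  · intro i
    refine ⟨1, ⟨{ toFun := fun _ => 0
                  invFun := fun _ => ⟨(Fintype.equivFin W).symm i, rfl⟩
                  left_inv := fun a => Subtype.ext (Set.mem_singleton_iff.mp a.2).symm
                  right_inv := fun k => Subsingleton.elim _ _
                  map_rel_iff' := ?_ }⟩⟩
    intro a b
    constructor
    · intro hadj
      exact absurd hadj ((pathGraph 1).irrefl)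
    · intro hadj
      have hab : a = b :=
        Subtype.ext ((Set.mem_singleton_iff.mp a.2).trans (Set.mem_singleton_iff.mp b.2).symm)
      exact absurd (hab ▸ hadj) ((H.induce _).irrefl)

lemma transfer {V : Type u} (G : SimpleGraph V) (S : Set V) (B₀ : Set ↥(Sᶜ)) (B : Set V)
    (hS : ∀ w ∈ S, ZFClosed G B w) (hB₀ : ∀ b : ↥(Sᶜ), b ∈ B₀ → ZFClosed G B b.1) :
    ∀ v : ↥(Sᶜ), ZFClosed (G.induce Sᶜ) B₀ v → ZFClosed G B v.1 := by
  intro v h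
  induction h with
  | init v h => exact hB₀ v h
  | force u v hu huv hforce ihu ihf =>
    refine ZFClosed.force u.1 v.1 ihu huv ?_
    intro w hw hwv
    by_cases hwS : w ∈ S
    · exact hS w hwS
    · exact ihf ⟨w, hwS⟩ hw (fun hh => hwv (congrArg Subtype.val hh))


theorem zeroForcingNumber_le_Tplus {V : Type*} [Fintype V] (G : SimpleGraph V) :
    zeroForcingNumber G ≤ Tplus G := by
  classical
  have hKne : {k | ∃ S : Finset V, (G.induce ((↑S : Set V)ᶜ)).IsAcyclic ∧
      k = pathCoverNumber (G.induce ((↑S : Set V)ᶜ)) + S.card}.Nonempty := by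
    refine ⟨_, Finset.univ, ?_, rfl⟩
    intro w c hc
    exact absurd w.2 (by simp)
  obtain ⟨S, hac, hkeq⟩ := Nat.sInf_mem hKne
  unfold Tplus
  rw [hkeq]
  haveI : Fintype ↥((↑S : Set V)ᶜ) := Fintype.ofFinite _
  have hpcne : {q | IsPathCoverOn (G.induce ((↑S : Set V)ᶜ)) Set.univ q}.Nonempty :=
    ⟨_, pathcover_singletons _⟩
  have hpc : IsPathCoverOn (G.induce ((↑S : Set V)ᶜ)) Set.univ
      (pathCoverNumber (G.induce ((↑S : Set V)ᶜ))) := Nat.sInf_mem hpcne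
  obtain ⟨D⟩ := exists_decomp _ hpc
  have hall : ∀ w, ZFA (G.induce ((↑S : Set V)ᶜ)) D.allowed D.start w :=
    core (Fintype.card ↥((↑S : Set V)ᶜ)) _ le_rfl hac _ D
  set B₀ : Finset ↥((↑S : Set V)ᶜ) :=
    Finset.image (fun i => D.σ i ⟨0, D.hm i⟩) Finset.univ with hB₀
  set B : Finset V := S ∪ Finset.image Subtype.val B₀ with hB
  have hBmemS : ∀ w ∈ (↑S : Set V), w ∈ (↑B : Set V) := by
    intro w hw
    rw [hB]
    simp only [Finset.coe_union, Set.mem_union, Finset.mem_coe]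
    exact Or.inl hw
  have hBmemB₀ : ∀ b : ↥((↑S : Set V)ᶜ), b ∈ (↑B₀ : Set _) → b.1 ∈ (↑B : Set V) := by
    intro b hb
    rw [hB]
    simp only [Finset.coe_union, Set.mem_union, Finset.mem_coe, Finset.mem_image]
    exact Or.inr ⟨b, Finset.mem_coe.mp hb, rfl⟩
  have hZF : IsZeroForcingSet G ↑B := by
    have hS' : ∀ w ∈ (↑S : Set V), ZFClosed G ↑B w := fun w hw => ZFClosed.init w (hBmemS w hw)
    have hB₀' : ∀ b : ↥((↑S : Set V)ᶜ), b ∈ (↑B₀ : Set _) → ZFClosed G ↑B b.1 :=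
      fun b hb => ZFClosed.init b.1 (hBmemB₀ b hb)
    intro v
    by_cases hv : v ∈ S
    · exact ZFClosed.init v (hBmemS v hv)
    · have hvc : v ∈ ((↑S : Set V)ᶜ) := hv
      have h1 : ZFClosed (G.induce ((↑S : Set V)ᶜ)) (↑B₀) ⟨v, hvc⟩ := by
        refine ZFClosed.mono ?_ (hall ⟨v, hvc⟩).toZFClosed
        rintro x ⟨i, hx⟩
        rw [← hx]
        rw [hB₀]
        simp only [Finset.coe_image, Finset.coe_univ, Set.image_univ, Set.mem_range]
        exact ⟨i, rfl⟩
      exact transfer G _ _ _ hS' hB₀' ⟨v, hvc⟩ h1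
  have hcard : B.card ≤ pathCoverNumber (G.induce ((↑S : Set V)ᶜ)) + S.card := by
    have h1 : B.card ≤ S.card + (Finset.image Subtype.val B₀).card := Finset.card_union_le _ _
    have h2 : (Finset.image Subtype.val B₀).card ≤ B₀.card := Finset.card_image_le
    have h3 : B₀.card ≤ pathCoverNumber (G.induce ((↑S : Set V)ᶜ)) := by
      rw [hB₀]
      refine le_trans Finset.card_image_le ?_
      simp
    omega
  have hmem : B.card ∈ {k | ∃ B' : Finset V, IsZeroForcingSet G ↑B' ∧ B'.card = k} :=
    ⟨B, hZF, rfl⟩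
  exact le_trans (Nat.sInf_le hmem) hcard
end

section
/- For the wheel graph W_n on n ≥ 4 vertices, M(W_n) = 3, T⁻(W_n) = -1 (interpreting T⁻ over the integers), and T⁺(W_n) = 3. -/
open SimpleGraph

/-!
The maximum nullity is bounded by zero forcing: a null vector of a matrix with the pattern of the
wheel (a hub joined to the rim cycle `C_m`) that vanishes at the hub and at two consecutive rim vertices vanishes everywhere, since the
row of each rim vertex then determines the entry at the next one. The bound `3` is attained by a
matrix whose kernel contains the all-ones vector and, placed on the rim, the real and imaginary
parts of `i ↦ ζ ^ i` for `ζ = exp (2πi / m)`.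

Deleting the hub and one rim vertex leaves a path, so `P - |S| = -1` and `P + |S| = 3` occur.
Conversely `P(W ∖ S) + 1 ≤ |S|` whenever `W ∖ S` is a forest. If the hub is deleted, `S` also
meets the rim, which would otherwise be a cycle; the rim minus one deleted vertex is a path, and
every further deleted vertex splits a path in at most two. If the hub is kept, the kept
rim vertices are pairwise non-adjacent (two adjacent ones would close a triangle with the hub), so
at most half of the rim is kept; two of them form a path through the hub and the others are
single vertices.
-/

open scoped Fin.CommRing Matrix

namespace SimpleGraph

variable {V : Type*} {G : SimpleGraph V}

theorem inducesPath_iff_exists_fin {W : Set V} :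
    InducesPath G W ↔ ∃ (n : ℕ) (f : Fin n → V), Function.Injective f ∧ Set.range f = W ∧
      ∀ i j, G.Adj (f i) (f j) ↔ (pathGraph n).Adj i j := by
  constructor
  · rintro ⟨n, ⟨e⟩⟩
    refine ⟨n, Subtype.val ∘ e.symm, Subtype.val_injective.comp e.symm.injective, ?_,
      fun i j => e.symm.map_adj_iff⟩
    rw [Set.range_comp, e.symm.surjective.range_eq, Set.image_univ, Subtype.range_coe]
  · rintro ⟨n, f, hf, rfl, hadj⟩
    exact ⟨n, ⟨(⟨Equiv.ofInjective f hf, hadj _ _⟩ : pathGraph n ≃g _).symm⟩⟩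

theorem inducesPath_range {n : ℕ} (f : Fin n → V) (hf : Function.Injective f)
    (hadj : ∀ i j, G.Adj (f i) (f j) ↔ (pathGraph n).Adj i j) : InducesPath G (Set.range f) :=
  inducesPath_iff_exists_fin.2 ⟨n, f, hf, rfl, hadj⟩

theorem inducesPath_singleton (x : V) : InducesPath G {x} := by
  rw [← Set.range_const (ι := Fin 1) (c := x)]
  refine inducesPath_range _ (fun i j _ => Subsingleton.elim i j) fun i j => ?_
  simp [Subsingleton.elim i j]

theorem inducesPath_pair {x y : V} (hxy : G.Adj x y) : InducesPath G {x, y} := by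
  rw [← Matrix.range_cons_cons_empty x y ![]]
  refine inducesPath_range _ ?_ fun i j => ?_
  · intro i j
    fin_cases i <;> fin_cases j <;> simp [hxy.ne, hxy.ne.symm]
  · fin_cases i <;> fin_cases j <;> simp [pathGraph_adj, hxy, hxy.symm]

theorem inducesPath_triple {x y z : V} (hxy : G.Adj x y) (hyz : G.Adj y z) (hxz : ¬G.Adj x z)
    (hne : x ≠ z) : InducesPath G {x, y, z} := by
  have hzx : ¬G.Adj z x := fun h => hxz h.symm
  rw [← Matrix.range_cons_cons_empty y z ![], ← Set.singleton_union, ← Matrix.range_cons]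
  refine inducesPath_range _ ?_ fun i j => ?_
  · intro i j
    fin_cases i <;> fin_cases j <;>
      simp [hxy.ne, hxy.ne.symm, hyz.ne, hyz.ne.symm, hne, hne.symm]
  · fin_cases i <;> fin_cases j <;>
      simp [pathGraph_adj, hxy, hxy.symm, hyz, hyz.symm, hxz, hzx]

theorem inducesPath_range_add {n : ℕ} {f : Fin n → V} (hf : Function.Injective f)
    (hadj : ∀ i j, G.Adj (f i) (f j) ↔ (pathGraph n).Adj i j) (a l : ℕ) (hal : a + l ≤ n) :
    InducesPath G (Set.range fun t : Fin l => f ⟨a + t, by omega⟩) := by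
  refine inducesPath_range _ (fun s t hst => Fin.ext ?_) fun s t => ?_
  · simpa using congrArg Fin.val (hf hst)
  · rw [hadj, pathGraph_adj, pathGraph_adj]
    dsimp only
    omega

theorem InducesPath.exists_split {W : Set V} (h : InducesPath G W) {v : V} (hv : v ∈ W) :
    ∃ L R : Set V, InducesPath G L ∧ InducesPath G R ∧ Disjoint L R ∧ L ∪ R = W \ {v} := by
  obtain ⟨n, f, hf, rfl, hadj⟩ := inducesPath_iff_exists_fin.1 h
  obtain ⟨k, rfl⟩ := hv
  have hk := k.isLt
  refine ⟨_, _, inducesPath_range_add hf hadj 0 k (by omega),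
    inducesPath_range_add hf hadj (k + 1) (n - (k + 1)) (by omega), ?_, ?_⟩
  · rw [Set.disjoint_left]
    rintro _ ⟨s, rfl⟩ ⟨t, ht⟩
    have := congrArg Fin.val (hf ht)
    dsimp only at this
    omega
  · ext x
    simp only [Set.mem_union, Set.mem_range, Set.mem_sdiff, Set.mem_singleton_iff]
    constructor
    · rintro (⟨t, rfl⟩ | ⟨t, rfl⟩)
      all_goals
        refine ⟨⟨_, rfl⟩, fun hx => ?_⟩
        have := congrArg Fin.val (hf hx)
        dsimp only at this
        omega
    · rintro ⟨⟨i, rfl⟩, hik⟩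
      have hik : i.val ≠ k.val := fun h => hik (congrArg f (Fin.ext h))
      rcases Nat.lt_or_gt_of_ne hik with hlt | hgt
      · exact Or.inl ⟨⟨i, hlt⟩, by simp⟩
      · exact Or.inr ⟨⟨i - (k + 1), by omega⟩, congrArg f (Fin.ext (by simp; omega))⟩

theorem pathGraph_isAcyclic (n : ℕ) : (pathGraph n).IsAcyclic := by
  rw [isAcyclic_iff_free_cycleGraph]
  rintro k hk ⟨f⟩
  obtain ⟨k, rfl⟩ : ∃ j, k = j + 3 := ⟨k - 3, by omega⟩
  -- the cycle vertex mapped lowest on the path would need two neighbours above it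
  obtain ⟨x, -, hmin⟩ := Finset.exists_min_image Finset.univ (fun x => (f x).val)
    Finset.univ_nonempty
  have hup : ∀ y, (cycleGraph (k + 3)).Adj x y → (f y).val = (f x).val + 1 := by
    intro y hxy
    have hfxy := f.toHom.map_adj hxy
    rw [pathGraph_adj, Copy.toHom_apply, Copy.toHom_apply] at hfxy
    have := hmin y (Finset.mem_univ _)
    omega
  have h₁ := hup (x + 1) (by simp [cycleGraph_adj])
  have h₂ := hup (x - 1) (by simp [cycleGraph_adj])
  have : x + 1 = x - 1 := f.injective (Fin.ext (by simp only [Copy.toHom_apply]; omega))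
  have : (2 : Fin (k + 3)) = 0 := by linear_combination this
  simp [Fin.ext_iff, Nat.mod_eq_of_lt] at this

theorem InducesPath.isAcyclic_induce {W : Set V} (h : InducesPath G W) :
    (G.induce W).IsAcyclic :=
  let ⟨n, ⟨e⟩⟩ := h
  e.isAcyclic_iff.2 (pathGraph_isAcyclic n)

theorem InducesPath.preimage_val {U W : Set V} (h : InducesPath G W) (hWU : W ⊆ U) :
    InducesPath (G.induce U) (Subtype.val ⁻¹' W) := by
  obtain ⟨n, f, hf, rfl, hadj⟩ := inducesPath_iff_exists_fin.1 h
  convert inducesPath_range (G := G.induce U) (fun t => ⟨f t, hWU ⟨t, rfl⟩⟩)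
    (fun s t hst => hf (congrArg Subtype.val hst)) (fun s t => hadj s t)
  ext ⟨x, hx⟩
  simp [Subtype.ext_iff]

theorem InducesPath.image_val {U : Set V} {W : Set U} (h : InducesPath (G.induce U) W) :
    InducesPath G (Subtype.val '' W) := by
  obtain ⟨n, f, hf, rfl, hadj⟩ := inducesPath_iff_exists_fin.1 h
  rw [← Set.range_comp]
  exact inducesPath_range _ (Subtype.val_injective.comp hf) hadj

theorem isPathCoverOn_induce_univ_iff {U : Set V} {p : ℕ} :
    IsPathCoverOn (G.induce U) Set.univ p ↔ IsPathCoverOn G U p := by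
  constructor
  · rintro ⟨parts, hne, hdisj, hunion, hpath⟩
    refine ⟨fun i => Subtype.val '' parts i, fun i => (hne i).image _,
      fun i j hij => (Set.disjoint_image_iff Subtype.val_injective).2 (hdisj hij), ?_,
      fun i => (hpath i).image_val⟩
    rw [← Set.image_iUnion, hunion, Set.image_univ, Subtype.range_coe]
  · rintro ⟨parts, hne, hdisj, hunion, hpath⟩
    have hsub : ∀ i, parts i ⊆ U := fun i => hunion ▸ Set.subset_iUnion parts i
    refine ⟨fun i => Subtype.val ⁻¹' parts i, fun i => ?_, fun i j hij => (hdisj hij).preimage _,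
      ?_, fun i => (hpath i).preimage_val (hsub i)⟩
    · obtain ⟨x, hx⟩ := hne i
      exact ⟨⟨x, hsub i hx⟩, hx⟩
    · rw [← Set.preimage_iUnion, hunion, Subtype.coe_preimage_self]

theorem IsPathCoverOn.pathCoverNumber_induce_le {U : Set V} {p : ℕ} (h : IsPathCoverOn G U p) :
    pathCoverNumber (G.induce U) ≤ p :=
  Nat.sInf_le (isPathCoverOn_induce_univ_iff.2 h)

theorem exists_isPathCoverOn_le_of_partition {U : Set V} {ι : Type*} [Fintype ι]
    (parts : ι → Set V) (hdisj : Pairwise fun i j => Disjoint (parts i) (parts j))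
    (hunion : ⋃ i, parts i = U) (hpath : ∀ i, InducesPath G (parts i)) :
    ∃ p ≤ Fintype.card ι, IsPathCoverOn G U p := by
  classical
  let e := (Fintype.equivFin {i // (parts i).Nonempty}).symm
  refine ⟨_, Fintype.card_subtype_le _, fun j => parts (e j), fun j => (e j).2,
    fun j k hjk => hdisj fun h => hjk (e.injective (Subtype.ext h)), ?_, fun j => hpath _⟩
  rw [← hunion]
  ext x
  simp only [Set.mem_iUnion]
  constructor
  · rintro ⟨j, hx⟩
    exact ⟨_, hx⟩
  · rintro ⟨i, hx⟩
    exact ⟨e.symm ⟨i, x, hx⟩, by simpa using hx⟩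

theorem pathCoverNumber_induce_le_of_partition {U : Set V} {ι : Type*} [Fintype ι]
    (parts : ι → Set V) (hdisj : Pairwise fun i j => Disjoint (parts i) (parts j))
    (hunion : ⋃ i, parts i = U) (hpath : ∀ i, InducesPath G (parts i)) :
    pathCoverNumber (G.induce U) ≤ Fintype.card ι :=
  let ⟨_, hp, hcover⟩ := exists_isPathCoverOn_le_of_partition parts hdisj hunion hpath
  hcover.pathCoverNumber_induce_le.trans hp

theorem InducesPath.pathCoverNumber_induce_le_one {U : Set V} (h : InducesPath G U) :
    pathCoverNumber (G.induce U) ≤ 1 :=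
  pathCoverNumber_induce_le_of_partition (ι := Unit) (fun _ => U)
    (fun i j hij => absurd (Subsingleton.elim i j) hij) (Set.iUnion_const U) fun _ => h

theorem isPathCoverOn_pathCoverNumber_induce [Finite V] (U : Set V) :
    IsPathCoverOn G U (pathCoverNumber (G.induce U)) := by
  have := Fintype.ofFinite U
  obtain ⟨p, -, hp⟩ := exists_isPathCoverOn_le_of_partition (G := G) (fun x : U => {x.val})
    (fun x y hxy => Set.disjoint_singleton.2 (Subtype.coe_ne_coe.2 hxy))
    (by rw [Set.iUnion_singleton_eq_range, Subtype.range_coe]) fun _ => inducesPath_singleton _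
  exact isPathCoverOn_induce_univ_iff.1
    (Nat.sInf_mem (s := {p | IsPathCoverOn (G.induce U) Set.univ p})
      ⟨p, isPathCoverOn_induce_univ_iff.2 hp⟩)

theorem one_le_pathCoverNumber_induce [Finite V] {U : Set V} (hU : U.Nonempty) :
    1 ≤ pathCoverNumber (G.induce U) := by
  obtain ⟨parts, -, -, hunion, -⟩ := isPathCoverOn_pathCoverNumber_induce (G := G) U
  obtain ⟨x, hx⟩ := hU
  rw [← hunion, Set.mem_iUnion] at hx
  obtain ⟨i, -⟩ := hx
  exact i.pos

theorem pathCoverNumber_induce_insert_le [Finite V] (U : Set V) (v : V) :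
    pathCoverNumber (G.induce (insert v U)) ≤ pathCoverNumber (G.induce U) + 1 := by
  by_cases hv : v ∈ U
  · rw [Set.insert_eq_of_mem hv]
    exact Nat.le_succ _
  obtain ⟨parts, -, hdisj, hunion, hpath⟩ := isPathCoverOn_pathCoverNumber_induce (G := G) U
  have hsub : ∀ i, parts i ⊆ U := fun i => hunion ▸ Set.subset_iUnion parts i
  have key := pathCoverNumber_induce_le_of_partition (G := G) (U := insert v U)
    (fun o : Option (Fin _) => o.elim {v} parts) ?_
    (by rw [Set.iUnion_option, Set.insert_eq]; exact congrArg ({v} ∪ ·) hunion)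
    (by rintro (_ | i); exacts [inducesPath_singleton v, hpath i])
  · simpa using key
  rintro (_ | i) (_ | j) hij
  · exact absurd rfl hij
  · exact Set.disjoint_singleton_left.2 fun h => hv (hsub j h)
  · exact Set.disjoint_singleton_right.2 fun h => hv (hsub i h)
  · exact hdisj fun h => hij (congrArg some h)

theorem pathCoverNumber_induce_diff_singleton_le [Finite V] (U : Set V) (v : V) :
    pathCoverNumber (G.induce (U \ {v})) ≤ pathCoverNumber (G.induce U) + 1 := by
  by_cases hv : v ∈ U
  swap
  · rw [Set.sdiff_singleton_eq_self hv]
    exact Nat.le_succ _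
  obtain ⟨parts, -, hdisj, hunion, hpath⟩ := isPathCoverOn_pathCoverNumber_induce (G := G) U
  obtain ⟨i₀, hi₀⟩ : ∃ i, v ∈ parts i := Set.mem_iUnion.1 (hunion.symm ▸ hv)
  obtain ⟨L, R, hL, hR, hLR, hsplit⟩ := (hpath i₀).exists_split hi₀
  have hRsub : R ⊆ parts i₀ \ {v} := hsplit ▸ Set.subset_union_right
  -- `v` cuts its path into `L` and `R`; removing `v` and `R` from every path leaves `L` in place
  -- of the path through `v` and all other paths unchanged
  have hparts : ∀ i, InducesPath G (parts i \ insert v R) := by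
    intro i
    by_cases hi : i = i₀
    · subst hi
      rwa [Set.insert_eq, ← Set.sdiff_sdiff, ← hsplit, Set.union_sdiff_right,
        sdiff_eq_left.2 hLR]
    · rw [sdiff_eq_left.2 (Set.disjoint_insert_right.2 ⟨Set.disjoint_left.1 (hdisj hi).symm hi₀,
        (hdisj hi).mono_right (hRsub.trans Set.sdiff_subset)⟩)]
      exact hpath i
  have key := pathCoverNumber_induce_le_of_partition (G := G) (U := U \ {v})
    (fun o : Option (Fin _) => o.elim R fun i => parts i \ insert v R) ?_ ?_ ?_
  · simpa using key
  · rintro (_ | i) (_ | j) hij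
    · exact absurd rfl hij
    · exact Set.disjoint_left.2 fun x hxR hx => hx.2 (Or.inr hxR)
    · exact Set.disjoint_right.2 fun x hxR hx => hx.2 (Or.inr hxR)
    · exact (hdisj fun h => hij (congrArg some h)).mono Set.sdiff_subset Set.sdiff_subset
  · have hRU : R ⊆ U \ {v} :=
      hRsub.trans (Set.sdiff_subset_sdiff_left (hunion ▸ Set.subset_iUnion _ _))
    simp only [Set.iUnion_option, Option.elim]
    rw [← Set.iUnion_sdiff, hunion, Set.insert_eq, ← Set.sdiff_sdiff, Set.union_sdiff_cancel hRU]
  · rintro (_ | i)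
    exacts [hR, hparts i]

theorem pathCoverNumber_induce_union_le [Finite V] (U : Set V) (F : Finset V) :
    pathCoverNumber (G.induce (U ∪ F)) ≤ pathCoverNumber (G.induce U) + F.card := by
  classical
  induction F using Finset.induction_on with
  | empty => rw [Finset.coe_empty, Set.union_empty, Finset.card_empty, add_zero]
  | insert a F ha ih =>
    rw [Finset.coe_insert, Set.union_insert, Finset.card_insert_of_notMem ha]
    exact (pathCoverNumber_induce_insert_le _ a).trans (by omega)

theorem pathCoverNumber_induce_diff_le [Finite V] (U : Set V) (F : Finset V) :
    pathCoverNumber (G.induce (U \ F)) ≤ pathCoverNumber (G.induce U) + F.card := by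
  classical
  induction F using Finset.induction_on with
  | empty => rw [Finset.coe_empty, Set.sdiff_empty, Finset.card_empty, add_zero]
  | insert a F ha ih =>
    rw [Finset.coe_insert, Set.insert_eq, Set.union_comm, ← Set.sdiff_sdiff,
      Finset.card_insert_of_notMem ha]
    exact (pathCoverNumber_induce_diff_singleton_le _ a).trans (by omega)

end SimpleGraph

namespace Nat

theorem add_one_mod_eq_ite {a m : ℕ} (ha : a < m) :
    (a + 1) % m = if a + 1 = m then 0 else a + 1 := by
  split_ifs with h
  · rw [h, Nat.mod_self]
  · exact Nat.mod_eq_of_lt (by omega)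

end Nat

section Wheel

variable {m : ℕ}

@[simp]
theorem wheelGraph_adj_none_some (i : Fin m) : (wheelGraph m).Adj none (some i) := by
  simp [wheelGraph]

@[simp]
theorem wheelGraph_adj_some_none (i : Fin m) : (wheelGraph m).Adj (some i) none :=
  (wheelGraph_adj_none_some i).symm

theorem wheelGraph_adj_some_some_iff_val {i j : Fin m} :
    (wheelGraph m).Adj (some i) (some j) ↔
      i ≠ j ∧ (j.val = (i.val + 1) % m ∨ i.val = (j.val + 1) % m) := by
  simp [wheelGraph]

theorem wheelGraph_adj_some_some [NeZero m] (hm : 2 ≤ m) {i j : Fin m} :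
    (wheelGraph m).Adj (some i) (some j) ↔ j = i + 1 ∨ i = j + 1 := by
  have hval : ∀ k : Fin m, (k + 1).val = (k.val + 1) % m := fun k => by
    rw [Fin.val_add, Fin.val_one', Nat.mod_eq_of_lt (by omega : 1 < m)]
  rw [wheelGraph_adj_some_some_iff_val, Fin.ext_iff, Fin.ext_iff, hval, hval]
  constructor
  · exact fun h => h.2
  · refine fun h => ⟨fun hij => ?_, h⟩
    subst hij
    rw [Nat.add_one_mod_eq_ite i.isLt] at h
    split_ifs at h <;> omega

theorem wheelGraph_adj_add [NeZero m] (hm : 2 ≤ m) (s i j : Fin m) :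
    (wheelGraph m).Adj (some (s + i)) (some (s + j)) ↔ (wheelGraph m).Adj (some i) (some j) := by
  simp only [wheelGraph_adj_some_some hm, add_assoc, add_right_inj]

theorem wheelGraph_not_isAcyclic_of_cycle_subset [NeZero m] (hm : 3 ≤ m)
    {K : Set (Option (Fin m))} (hK : ∀ i, some i ∈ K) : ¬((wheelGraph m).induce K).IsAcyclic := by
  rw [isAcyclic_iff_free_cycleGraph]
  refine fun h => h m hm ⟨⟨⟨fun i => ⟨some i, hK i⟩, fun {i j} hij => ?_⟩,
    fun i j hij => Option.some_injective _ (congrArg Subtype.val hij)⟩⟩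
  have h1 : ((1 : Fin m) : ℕ) = 1 := by rw [Fin.val_one', Nat.mod_eq_of_lt (by omega)]
  rw [cycleGraph_adj', ← h1, ← Fin.ext_iff, ← Fin.ext_iff, sub_eq_iff_eq_add',
    sub_eq_iff_eq_add'] at hij
  exact (wheelGraph_adj_some_some (by omega)).2 hij.symm

theorem wheelGraph_not_isAcyclic_of_triangle {K : Set (Option (Fin m))} {i j : Fin m}
    (hhub : none ∈ K) (hi : some i ∈ K) (hj : some j ∈ K)
    (hij : (wheelGraph m).Adj (some i) (some j)) : ¬((wheelGraph m).induce K).IsAcyclic := by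
  intro hK
  refine hK.cliqueFree le_rfl {⟨none, hhub⟩, ⟨some i, hi⟩, ⟨some j, hj⟩} ?_
  rw [is3Clique_triple_iff]
  exact ⟨wheelGraph_adj_none_some i, wheelGraph_adj_none_some j, hij⟩

theorem wheelGraph_inducesPath_compl [NeZero m] (hm : 3 ≤ m) (s : Fin m) :
    InducesPath (wheelGraph m) {none, some s}ᶜ := by
  -- the cycle read off from `s + 1` to `s - 1`
  let f : Fin (m - 1) → Option (Fin m) := fun t => some (s + ⟨t + 1, by omega⟩)
  have hrange : Set.range f = {none, some s}ᶜ := by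
    ext (_ | j)
    · simp [f]
    · simp only [Set.mem_range, Set.mem_compl_iff, Set.mem_insert_iff, Set.mem_singleton_iff,
        reduceCtorEq, false_or, Option.some.injEq, f]
      constructor
      · rintro ⟨t, rfl⟩ h
        have := congrArg Fin.val (add_eq_left.1 h)
        simp at this
      · intro hj
        have hpos : (j - s).val ≠ 0 := fun h => hj (sub_eq_zero.1 (Fin.ext h))
        exact ⟨⟨(j - s).val - 1, by omega⟩,
          (congrArg (s + ·) (Fin.ext (by dsimp only; omega))).trans (add_sub_cancel s j)⟩
  rw [← hrange]
  refine inducesPath_range f (fun a b hab => Fin.ext ?_) fun a b => ?_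
  · simpa using congrArg Fin.val (add_left_cancel (Option.some_injective _ hab))
  · have ha := a.isLt
    have hb := b.isLt
    rw [wheelGraph_adj_add (by omega), wheelGraph_adj_some_some_iff_val, pathGraph_adj]
    simp only [ne_eq, Fin.mk.injEq]
    rw [Nat.add_one_mod_eq_ite (by omega : a.val + 1 < m),
      Nat.add_one_mod_eq_ite (by omega : b.val + 1 < m)]
    split_ifs <;> (try simp only [false_or, or_false, and_false, false_iff, not_or]) <;> omega

theorem wheelGraph_pathCoverNumber_add_one_le_of_hub_mem [NeZero m] (hm : 3 ≤ m)
    {S : Finset (Option (Fin m))} (hS : ((wheelGraph m).induce (↑S)ᶜ).IsAcyclic)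
    (hhub : none ∈ S) : pathCoverNumber ((wheelGraph m).induce (↑S)ᶜ) + 1 ≤ S.card := by
  classical
  obtain ⟨s, hs⟩ : ∃ s, some s ∈ S := by
    by_contra! h
    exact wheelGraph_not_isAcyclic_of_cycle_subset hm (fun i => h i) hS
  have hsub : {none, some s} ⊆ S := Finset.insert_subset hhub (Finset.singleton_subset_iff.2 hs)
  have hcompl : ((↑S)ᶜ : Set (Option (Fin m))) =
      (↑({none, some s} : Finset (Option (Fin m))))ᶜ \ ↑(S \ {none, some s}) := by
    ext x
    have := @hsub x
    simp only [Set.mem_compl_iff, Finset.mem_coe, Set.mem_sdiff, Finset.mem_sdiff] at this ⊢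
    tauto
  have hdiff := pathCoverNumber_induce_diff_le (G := wheelGraph m)
    (↑({none, some s} : Finset (Option (Fin m))))ᶜ (S \ {none, some s})
  have hcard : (S \ {none, some s}).card + 2 = S.card := by
    rw [Finset.card_sdiff_of_subset hsub, Finset.card_pair (by simp)]
    have := Finset.card_le_card hsub
    rw [Finset.card_pair (by simp)] at this
    omega
  rw [← hcompl] at hdiff
  have := (wheelGraph_inducesPath_compl hm s).pathCoverNumber_induce_le_one
  rw [← Finset.coe_pair] at this
  omega

theorem Finset.card_compl_le_card_add_one_of_some_add_one_mem [NeZero m]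
    {S : Finset (Option (Fin m))} (hS : ∀ i, some i ∉ S → some (i + 1) ∈ S) :
    Sᶜ.card ≤ S.card + 1 := by
  classical
  have : Sᶜ ⊆ insert none (S.image (Option.map (· - 1))) := by
    rintro (_ | k) hk
    · simp
    · exact Finset.mem_insert_of_mem
        (Finset.mem_image.2 ⟨_, hS k (Finset.mem_compl.1 hk), by simp⟩)
  exact (Finset.card_le_card this).trans
    ((Finset.card_insert_le _ _).trans (by simpa using Finset.card_image_le))

theorem Finset.compl_eq_of_some_notMem_subsingleton {S : Finset (Option (Fin m))}
    (hhub : none ∉ S) (hS : ∀ i j, some i ∉ S → some j ∉ S → i = j) :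
    Sᶜ = {none} ∨ ∃ i, Sᶜ = {none, some i} := by
  by_cases h : ∃ i, some i ∉ S
  · obtain ⟨i, hi⟩ := h
    refine Or.inr ⟨i, ?_⟩
    ext (_ | j)
    · simp [hhub]
    · simp only [Finset.mem_compl, Finset.mem_insert, Finset.mem_singleton, reduceCtorEq,
        Option.some.injEq, false_or]
      exact ⟨fun hj => hS j i hj hi, fun h => h ▸ hi⟩
  · push Not at h
    refine Or.inl ?_
    ext (_ | j)
    · simp [hhub]
    · simp [h j]

theorem wheelGraph_pathCoverNumber_add_one_le_of_hub_notMem [NeZero m] (hm : 3 ≤ m)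
    {S : Finset (Option (Fin m))} (hS : ((wheelGraph m).induce (↑S)ᶜ).IsAcyclic)
    (hhub : none ∉ S) : pathCoverNumber ((wheelGraph m).induce (↑S)ᶜ) + 1 ≤ S.card := by
  classical
  have hind : ∀ i j, some i ∉ S → some j ∉ S → ¬(wheelGraph m).Adj (some i) (some j) :=
    fun i j hi hj hij => wheelGraph_not_isAcyclic_of_triangle (K := (↑S)ᶜ) hhub hi hj hij hS
  have htotal : S.card + Sᶜ.card = m + 1 := by
    rw [Finset.card_add_card_compl, Fintype.card_option, Fintype.card_fin]
  rw [← Finset.coe_compl]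
  by_cases htwo : ∃ i j, i ≠ j ∧ some i ∉ S ∧ some j ∉ S
  · obtain ⟨i, j, hij, hi, hj⟩ := htwo
    have hcard : Sᶜ.card ≤ S.card + 1 :=
      Finset.card_compl_le_card_add_one_of_some_add_one_mem fun k hk => by_contra fun h =>
        hind k (k + 1) hk h ((wheelGraph_adj_some_some (by omega)).2 (Or.inl rfl))
    -- the path `i, hub, j` together with the other kept rim vertices as single points
    set B : Finset (Option (Fin m)) := {some i, none, some j}
    have hB : B ⊆ Sᶜ := by simp [B, Finset.insert_subset_iff, hi, hj, hhub]
    have hBcard : B.card = 3 := by simp [B, Finset.card_insert_of_notMem, hij]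
    have hpath : InducesPath (wheelGraph m) (B : Set (Option (Fin m))) := by
      simpa [B] using inducesPath_triple (wheelGraph_adj_some_none i) (wheelGraph_adj_none_some j)
        (hind i j hi hj) (by simpa using hij)
    have hunion := pathCoverNumber_induce_union_le (G := wheelGraph m) B (Sᶜ \ B)
    rw [← Finset.coe_union, Finset.union_sdiff_of_subset hB, Finset.card_sdiff_of_subset hB]
      at hunion
    have := hpath.pathCoverNumber_induce_le_one
    have := Finset.card_le_card hB
    omega
  · rcases Finset.compl_eq_of_some_notMem_subsingleton hhub
      (fun i j hi hj => by_contra fun hij => htwo ⟨i, j, hij, hi, hj⟩) with h | ⟨i, h⟩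
    · rw [h, Finset.card_singleton] at htotal
      rw [h, Finset.coe_singleton]
      have := (inducesPath_singleton (G := wheelGraph m) none).pathCoverNumber_induce_le_one
      omega
    · rw [h, Finset.card_pair (by simp)] at htotal
      rw [h, Finset.coe_pair]
      have := (inducesPath_pair (wheelGraph_adj_none_some (m := m) i)).pathCoverNumber_induce_le_one
      omega

theorem wheelGraph_pathCoverNumber_add_one_le [NeZero m] (hm : 3 ≤ m)
    {S : Finset (Option (Fin m))} (hS : ((wheelGraph m).induce (↑S)ᶜ).IsAcyclic) :
    pathCoverNumber ((wheelGraph m).induce (↑S)ᶜ) + 1 ≤ S.card := by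
  by_cases hhub : none ∈ S
  · exact wheelGraph_pathCoverNumber_add_one_le_of_hub_mem hm hS hhub
  · exact wheelGraph_pathCoverNumber_add_one_le_of_hub_notMem hm hS hhub

theorem wheelGraph_exists_deletion [NeZero m] (hm : 3 ≤ m) :
    ∃ S : Finset (Option (Fin m)), ((wheelGraph m).induce (↑S)ᶜ).IsAcyclic ∧
      pathCoverNumber ((wheelGraph m).induce (↑S)ᶜ) = 1 ∧ S.card = 2 := by
  have hpath := wheelGraph_inducesPath_compl hm 0
  have hne : (({none, some 0} : Set (Option (Fin m)))ᶜ).Nonempty :=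
    ⟨some ⟨1, by omega⟩, by simp [Fin.ext_iff]⟩
  refine ⟨{none, some 0}, ?_, ?_, Finset.card_pair (by simp)⟩ <;> rw [Finset.coe_pair]
  · exact hpath.isAcyclic_induce
  · exact le_antisymm hpath.pathCoverNumber_induce_le_one (one_le_pathCoverNumber_induce hne)

theorem wheelGraph_Tminus (hm : 3 ≤ m) : Tminus (wheelGraph m) = -1 := by
  have : NeZero m := ⟨by omega⟩
  obtain ⟨S₀, hac, hP, hcard⟩ := wheelGraph_exists_deletion hm
  refine IsGreatest.csSup_eq ⟨⟨S₀, hac, by rw [hP, hcard]; norm_num⟩, ?_⟩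
  rintro d ⟨S, hS, rfl⟩
  have : (pathCoverNumber ((wheelGraph m).induce (↑S)ᶜ) : ℤ) + 1 ≤ S.card := by
    exact_mod_cast wheelGraph_pathCoverNumber_add_one_le hm hS
  omega

theorem wheelGraph_Tplus (hm : 3 ≤ m) : Tplus (wheelGraph m) = 3 := by
  have : NeZero m := ⟨by omega⟩
  obtain ⟨S₀, hac, hP, hcard⟩ := wheelGraph_exists_deletion hm
  refine IsLeast.csInf_eq ⟨⟨S₀, hac, by rw [hP, hcard]⟩, ?_⟩
  rintro k ⟨S, hS, rfl⟩
  have := wheelGraph_pathCoverNumber_add_one_le hm hS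
  by_cases hne : ((↑S : Set (Option (Fin m)))ᶜ).Nonempty
  · have := one_le_pathCoverNumber_induce (G := wheelGraph m) hne
    omega
  · rw [Set.not_nonempty_iff_eq_empty, Set.compl_empty_iff, Finset.coe_eq_univ] at hne
    rw [hne, Finset.card_univ, Fintype.card_option, Fintype.card_fin]
    omega

end Wheel

theorem isPrimitiveRoot_exp_two_pi_div {m : ℕ} (hm : m ≠ 0) :
    IsPrimitiveRoot (Complex.exp (↑(2 * Real.pi / m) * Complex.I)) m := by
  convert Complex.isPrimitiveRoot_exp m hm using 2
  push_cast
  ring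

theorem sin_two_pi_div_ne_zero {m : ℕ} (hm : 3 ≤ m) : Real.sin (2 * Real.pi / m) ≠ 0 := by
  have hm' : (3 : ℝ) ≤ m := by exact_mod_cast hm
  refine (Real.sin_pos_of_pos_of_lt_pi (by positivity) ?_).ne'
  rw [div_lt_iff₀ (by positivity)]
  nlinarith [Real.pi_pos]

open Complex in
theorem exp_mul_I_sq_sub_two_cos_mul_add_one (θ : ℝ) :
    exp (θ * I) ^ 2 - 2 * (Real.cos θ : ℂ) * exp (θ * I) + 1 = 0 := by
  have hprod : exp (θ * I) * exp (-θ * I) = 1 := by rw [← Complex.exp_add]; simp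
  rw [Complex.ofReal_cos, two_cos]
  linear_combination -hprod

section MaximumNullity

open Real

variable {m : ℕ}

theorem MatchesGraph.wheelGraph_zero_forcing_step
    {A : Matrix (Option (Fin m)) (Option (Fin m)) ℝ} (hA : MatchesGraph (wheelGraph m) A)
    {x : Option (Fin m) → ℝ} (hx : A *ᵥ x = 0) (hhub : x none = 0) {k : ℕ} (hk : k + 2 < m)
    (hlow : ∀ j : Fin m, (j : ℕ) ≤ k + 1 → x (some j) = 0) : x (some ⟨k + 2, hk⟩) = 0 := by
  -- the row of rim vertex `k + 1` sees only `k + 2` among the vertices not yet known to vanish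
  set r : Option (Fin m) := some ⟨k + 1, by omega⟩
  have hrow : A r (some ⟨k + 2, hk⟩) * x (some ⟨k + 2, hk⟩) = 0 := by
    have hr : ∑ u, A r u * x u = 0 := congrFun hx r
    rwa [Finset.sum_eq_single (some ⟨k + 2, hk⟩) (fun u _ hu => ?_) (by simp)] at hr
    rcases u with _ | j
    · rw [hhub, mul_zero]
    · by_cases hj : (j : ℕ) ≤ k + 1
      · rw [hlow j hj, mul_zero]
      have hne : r ≠ some j := fun h => hj (by simp [← Option.some_injective _ h])
      have hj' : (j : ℕ) ≠ k + 2 := fun h => hu (congrArg some (Fin.ext h))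
      have hnadj : ¬(wheelGraph m).Adj r (some j) := by
        rw [wheelGraph_adj_some_some_iff_val]
        simp only [ne_eq, Fin.ext_iff]
        rw [Nat.add_one_mod_eq_ite (by omega : k + 1 < m), Nat.add_one_mod_eq_ite j.isLt]
        split_ifs <;> (try simp only [or_false]) <;> omega
      rw [not_not.1 (mt (hA.2 _ _ hne).1 hnadj), zero_mul]
  have hadj : (wheelGraph m).Adj r (some ⟨k + 2, hk⟩) := by
    rw [wheelGraph_adj_some_some_iff_val, Nat.add_one_mod_eq_ite (by omega : k + 1 < m)]
    simp only [ne_eq, Fin.mk.injEq]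
    split_ifs <;> omega
  exact (mul_eq_zero.1 hrow).resolve_left ((hA.2 _ _ hadj.ne).2 hadj)

variable [NeZero m]

theorem MatchesGraph.wheelGraph_eq_zero_of_mulVec_eq_zero (hm : 3 ≤ m)
    {A : Matrix (Option (Fin m)) (Option (Fin m)) ℝ} (hA : MatchesGraph (wheelGraph m) A)
    {x : Option (Fin m) → ℝ} (hx : A *ᵥ x = 0) (hhub : x none = 0) (h₀ : x (some 0) = 0)
    (h₁ : x (some 1) = 0) : x = 0 := by
  have h1 : ((1 : Fin m) : ℕ) = 1 := by rw [Fin.val_one', Nat.mod_eq_of_lt (by omega)]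
  have hrim : ∀ k, ∀ j : Fin m, (j : ℕ) ≤ k + 1 → x (some j) = 0 := by
    intro k
    induction k with
    | zero =>
      intro j hj
      rcases Nat.le_one_iff_eq_zero_or_eq_one.1 hj with hj | hj
      · rwa [show j = 0 from Fin.ext hj]
      · rwa [show j = 1 from Fin.ext (hj.trans h1.symm)]
    | succ k ih =>
      intro j hj
      by_cases hjk : (j : ℕ) ≤ k + 1
      · exact ih j hjk
      · have : j = ⟨k + 2, by omega⟩ := Fin.ext (by simp; omega)
        rw [this]
        exact hA.wheelGraph_zero_forcing_step hx hhub _ ih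
  ext (_ | j)
  exacts [hhub, hrim m j (by omega)]

theorem MatchesGraph.wheelGraph_matNullity_le (hm : 3 ≤ m)
    {A : Matrix (Option (Fin m)) (Option (Fin m)) ℝ} (hA : MatchesGraph (wheelGraph m) A) :
    matNullity A ≤ 3 := by
  let ev : (Option (Fin m) → ℝ) →ₗ[ℝ] Fin 3 → ℝ :=
    LinearMap.pi fun t => LinearMap.proj (![none, some 0, some 1] t)
  have hinj : Function.Injective (ev ∘ₗ (LinearMap.ker A.mulVecLin).subtype) := by
    refine (injective_iff_map_eq_zero _).2 fun ⟨x, hx⟩ hev => Subtype.ext ?_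
    have e := congrFun hev
    exact hA.wheelGraph_eq_zero_of_mulVec_eq_zero hm hx (e 0) (e 1) (e 2)
  simpa [matNullity] using LinearMap.finrank_le_finrank_of_injective hinj

/-- With `c = cos (2π / m)` and `ζ = exp (2πi / m)`, the rim block (`-2c` on the diagonal, `1`
between neighbours) annihilates `i ↦ ζ ^ i` because `ζ + ζ⁻¹ = 2c`; the hub entries are chosen so
that the all-ones vector lies in the kernel as well. -/
noncomputable def wheelMatrix (m : ℕ) [NeZero m] (c : ℝ) :
    Matrix (Option (Fin m)) (Option (Fin m)) ℝ :=
  Matrix.of fun u v => match u, v with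
    | none, none => 2 * m * (1 - c)
    | none, some _ | some _, none => -2 * (1 - c)
    | some i, some j =>
      (if j = i then -2 * c else 0) + (if j = i + 1 then 1 else 0) + (if j = i - 1 then 1 else 0)

theorem wheelMatrix_mulVec_none (c : ℝ) (x : Option (Fin m) → ℝ) :
    (wheelMatrix m c *ᵥ x) none = 2 * m * (1 - c) * x none - 2 * (1 - c) * ∑ j, x (some j) := by
  simp only [Matrix.mulVec, dotProduct, wheelMatrix, neg_mul, Matrix.of_apply,
    Fintype.sum_option, Finset.sum_neg_distrib, Finset.mul_sum]
  ring

theorem wheelMatrix_mulVec_some (c : ℝ) (x : Option (Fin m) → ℝ) (i : Fin m) :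
    (wheelMatrix m c *ᵥ x) (some i) =
      -2 * (1 - c) * x none - 2 * c * x (some i) + x (some (i + 1)) + x (some (i - 1)) := by
  simp only [Matrix.mulVec, dotProduct, wheelMatrix, neg_mul, Matrix.of_apply,
    Fintype.sum_option, add_mul, ite_mul, zero_mul, one_mul, Finset.sum_add_distrib,
    Finset.sum_ite_eq', Finset.mem_univ, ↓reduceIte]
  ring

theorem matchesGraph_wheelMatrix (hm : 2 ≤ m) {c : ℝ} (hc : c ≠ 1) :
    MatchesGraph (wheelGraph m) (wheelMatrix m c) := by
  have hhub : -2 * (1 - c) ≠ 0 := by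
    intro h
    exact hc (by linarith)
  refine ⟨?_, ?_⟩
  · ext (_ | i) (_ | j) <;> simp only [wheelMatrix, Matrix.transpose_apply, Matrix.of_apply]
    have h₁ : i = j - 1 ↔ j = i + 1 := by rw [eq_sub_iff_add_eq, eq_comm]
    have h₂ : i = j + 1 ↔ j = i - 1 := by rw [eq_sub_iff_add_eq, eq_comm]
    rw [add_right_comm]
    simp only [h₁, h₂, @eq_comm _ i j]
  · rintro (_ | i) (_ | j) hij
    · exact absurd rfl hij
    · simpa [wheelMatrix] using hhub
    · simpa [wheelMatrix] using hhub
    · have hij : j ≠ i := fun h => hij (h ▸ rfl)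
      simp only [wheelMatrix, Matrix.of_apply, if_neg hij, zero_add, wheelGraph_adj_some_some hm,
        eq_sub_iff_add_eq, eq_comm (a := i)]
      split_ifs <;> norm_num <;> tauto

theorem wheelMatrix_mulVec_one (c : ℝ) : wheelMatrix m c *ᵥ (fun _ => 1) = 0 := by
  ext (_ | i)
  · simp only [wheelMatrix_mulVec_none, mul_one, Finset.sum_const, Finset.card_univ,
      Fintype.card_fin, nsmul_eq_mul, Pi.zero_apply]
    ring
  · simp only [wheelMatrix_mulVec_some, mul_one, Pi.zero_apply]
    ring

theorem wheelMatrix_mulVec_rim (hm : 2 ≤ m) (L : ℂ →ₗ[ℝ] ℝ) :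
    wheelMatrix m (Real.cos (2 * π / m)) *ᵥ
      (fun u => u.elim 0 fun i => L (Complex.exp (↑(2 * π / m) * Complex.I) ^ (i : ℕ))) = 0 := by
  set ζ := Complex.exp (↑(2 * π / m) * Complex.I)
  have hζ := isPrimitiveRoot_exp_two_pi_div (m := m) (by omega)
  have hsucc : ∀ i : Fin m, ζ ^ ((i + 1 : Fin m) : ℕ) = ζ ^ (i : ℕ) * ζ := fun i => by
    rw [Fin.val_add, Fin.val_one', Nat.mod_eq_of_lt (by omega : 1 < m),
      ← pow_eq_pow_mod _ hζ.pow_eq_one, pow_succ]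
  ext (_ | i)
  · simp only [wheelMatrix_mulVec_none, Option.elim, ← map_sum, mul_zero, zero_sub,
      Pi.zero_apply]
    rw [Fin.sum_univ_eq_sum_range (fun k => ζ ^ k), hζ.geom_sum_eq_zero (by omega)]
    simp
  · -- `ζ` is a root of `X ^ 2 - 2 cos (2π / m) X + 1`
    have hrec : ζ ^ ((i + 1 : Fin m) : ℕ) - (2 * Real.cos (2 * π / m)) • ζ ^ (i : ℕ) +
        ζ ^ ((i - 1 : Fin m) : ℕ) = 0 := by
      have hi : ζ ^ (i : ℕ) = ζ ^ ((i - 1 : Fin m) : ℕ) * ζ := by rw [← hsucc, sub_add_cancel]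
      rw [hsucc, hi, Complex.real_smul, Complex.ofReal_mul, Complex.ofReal_ofNat]
      linear_combination
        ζ ^ ((i - 1 : Fin m) : ℕ) * exp_mul_I_sq_sub_two_cos_mul_add_one (2 * π / m)
    have := congrArg L hrec
    simp only [map_add, map_sub, map_smul, smul_eq_mul, map_zero] at this
    simp only [wheelMatrix_mulVec_some, Option.elim, Pi.zero_apply]
    linarith

theorem three_le_matNullity_wheelMatrix (hm : 3 ≤ m) :
    3 ≤ matNullity (wheelMatrix m (Real.cos (2 * π / m))) := by
  set A := wheelMatrix m (Real.cos (2 * π / m))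
  set ζ := Complex.exp (↑(2 * π / m) * Complex.I)
  let v : Fin 3 → Option (Fin m) → ℝ := ![fun u => u.elim 0 fun i => (ζ ^ (i : ℕ)).re,
    fun u => u.elim 0 fun i => (ζ ^ (i : ℕ)).im, fun _ => 1]
  have hker : ∀ t, v t ∈ LinearMap.ker A.mulVecLin := by
    intro t
    rw [LinearMap.mem_ker, Matrix.mulVecLin_apply]
    fin_cases t
    exacts [wheelMatrix_mulVec_rim (by omega) Complex.reLm,
      wheelMatrix_mulVec_rim (by omega) Complex.imLm, wheelMatrix_mulVec_one _]
  have hsin := sin_two_pi_div_ne_zero hm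
  have hζ₀ : ζ ^ ((0 : Fin m) : ℕ) = 1 := by rw [Fin.val_zero, pow_zero]
  have hζ₁ : ζ ^ ((1 : Fin m) : ℕ) = ζ := by
    rw [Fin.val_one', Nat.mod_eq_of_lt (by omega), pow_one]
  have hli : LinearIndependent ℝ v := by
    rw [Fintype.linearIndependent_iff]
    intro g hg
    have e₀ := congrFun hg none
    have e₁ := congrFun hg (some 0)
    have e₂ := congrFun hg (some 1)
    simp only [v, Fin.sum_univ_three, Pi.add_apply, Pi.smul_apply, Pi.zero_apply, smul_eq_mul,
      Matrix.cons_val_zero, Matrix.cons_val_one, Matrix.cons_val_two, Matrix.head_cons,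
      Matrix.tail_cons, Option.elim, hζ₀, hζ₁, Complex.one_re, Complex.one_im, ζ,
      Complex.exp_ofReal_mul_I_re, Complex.exp_ofReal_mul_I_im] at e₀ e₁ e₂
    have g₂ : g 2 = 0 := by linarith
    have g₀ : g 0 = 0 := by linarith
    have g₁ : g 1 = 0 := by
      rw [g₀, g₂] at e₂
      simpa [hsin] using e₂
    intro t
    fin_cases t <;> assumption
  have := (LinearIndependent.of_comp (LinearMap.ker A.mulVecLin).subtype
    (v := fun t => (⟨v t, hker t⟩ : LinearMap.ker A.mulVecLin)) hli).fintype_card_le_finrank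
  rwa [Fintype.card_fin] at this

end MaximumNullity

open Real in
theorem wheelGraph_maxNullity {m : ℕ} (hm : 3 ≤ m) : maxNullity (wheelGraph m) = 3 := by
  have : NeZero m := ⟨by omega⟩
  have hcos : Real.cos (2 * π / m) ≠ 1 := fun h => by
    have := Real.sin_sq_add_cos_sq (2 * π / m)
    rw [h] at this
    exact sin_two_pi_div_ne_zero hm (pow_eq_zero_iff two_ne_zero |>.1 (by linarith))
  refine IsGreatest.csSup_eq ⟨⟨_, matchesGraph_wheelMatrix (by omega) hcos,
    le_antisymm ((matchesGraph_wheelMatrix (by omega) hcos).wheelGraph_matNullity_le hm)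
      (three_le_matNullity_wheelMatrix hm)⟩, ?_⟩
  rintro k ⟨A, hA, rfl⟩
  exact hA.wheelGraph_matNullity_le hm

theorem wheel_maxNullity_Tminus_Tplus (n : ℕ) (hn : 4 ≤ n) :
    maxNullity (wheelGraph (n - 1)) = 3 ∧
      Tminus (wheelGraph (n - 1)) = -1 ∧
      Tplus (wheelGraph (n - 1)) = 3 := by
  have hm : 3 ≤ n - 1 := by omega
  exact ⟨wheelGraph_maxNullity hm, wheelGraph_Tminus hm, wheelGraph_Tplus hm⟩
end

section
/- Let S be an optimal set of vertices for T⁺(G), i.e., G∖S is a forest and T⁺(G) = P(G∖S) + |S|. Then any subset S' ⊆ S such that G∖S' is a forest is also optimal: T⁺(G) = P(G∖S') + |S'|. -/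
open SimpleGraph

lemma inducesPath_singleton {V : Type*} (G : SimpleGraph V) (x : V) :
    InducesPath G {x} := by
  refine ⟨1, ⟨⟨⟨fun _ => 0, fun _ => ⟨x, rfl⟩, fun a => Subtype.ext a.2.symm,
    fun a => Subsingleton.elim _ _⟩, ?_⟩⟩⟩
  intro a b
  constructor
  · intro h
    exact absurd (Subsingleton.elim a b ▸ h) ((pathGraph 1).irrefl)
  · intro h
    have : a = b := Subtype.ext (a.2.trans b.2.symm)
    exact absurd (this ▸ h) ((G.induce {x}).irrefl)

lemma induce_induce_iso {V : Type*} (G : SimpleGraph V) (A : Set V) (W : Set ↑A) :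
    Nonempty ((G.induce A).induce W ≃g G.induce (Subtype.val '' W)) := by
  refine ⟨⟨Equiv.Set.image Subtype.val W Subtype.val_injective, ?_⟩⟩
  intro a b
  simp [Equiv.Set.image, Equiv.Set.imageOfInjOn]

lemma inducesPath_image {V : Type*} {G : SimpleGraph V} {A : Set V} {W : Set ↑A} :
    InducesPath (G.induce A) W ↔ InducesPath G (Subtype.val '' W) := by
  obtain ⟨e⟩ := induce_induce_iso G A W
  constructor
  · rintro ⟨n, ⟨f⟩⟩; exact ⟨n, ⟨e.symm.trans f⟩⟩
  · rintro ⟨n, ⟨f⟩⟩; exact ⟨n, ⟨e.trans f⟩⟩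

lemma isPathCoverOn_induce_iff {V : Type*} (G : SimpleGraph V) (A : Set V) (p : ℕ) :
    IsPathCoverOn (G.induce A) Set.univ p ↔ IsPathCoverOn G A p := by
  constructor
  · rintro ⟨parts, hne, hdisj, huniv, hpath⟩
    refine ⟨fun i => Subtype.val '' parts i, fun i => (hne i).image _,
      fun i j hij => (Set.disjoint_image_iff Subtype.val_injective).mpr (hdisj hij), ?_,
      fun i => inducesPath_image.mp (hpath i)⟩
    rw [← Set.image_iUnion, huniv, Set.image_univ, Subtype.range_coe]
  · rintro ⟨parts, hne, hdisj, huA, hpath⟩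
    have hsub : ∀ i, parts i ⊆ A := fun i => huA ▸ Set.subset_iUnion parts i
    refine ⟨fun i => Subtype.val ⁻¹' parts i, ?_, ?_, ?_, ?_⟩
    · intro i
      obtain ⟨x, hx⟩ := hne i
      exact ⟨⟨x, hsub i hx⟩, hx⟩
    · intro i j hij
      exact (hdisj hij).preimage _
    · ext a
      simp only [Set.mem_iUnion, Set.mem_preimage, Set.mem_univ, iff_true]
      have h2 : (a : V) ∈ ⋃ i, parts i := huA.symm ▸ a.2
      exact Set.mem_iUnion.mp h2
    · intro i
      rw [inducesPath_image, Subtype.image_preimage_coe, Set.inter_eq_right.mpr (hsub i)]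
      exact hpath i

lemma pathCoverNumber_induce {V : Type*} (G : SimpleGraph V) (A : Set V) :
    pathCoverNumber (G.induce A) = sInf {p | IsPathCoverOn G A p} := by
  unfold pathCoverNumber
  congr 1
  ext p
  exact isPathCoverOn_induce_iff G A p

lemma isPathCoverOn_add {V : Type*} (G : SimpleGraph V) {A : Set V} {p : ℕ}
    (h : IsPathCoverOn G A p) (T : Finset V) (hd : Disjoint A (↑T : Set V)) :
    IsPathCoverOn G (A ∪ ↑T) (p + T.card) := by
  obtain ⟨parts, hne, hdisj, huA, hpath⟩ := h
  set f : Fin p ⊕ Fin T.card → Set V :=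
    Sum.elim parts (fun j => {(T.equivFin.symm j : V)}) with hf
  have hsingT : (⋃ j, ({(T.equivFin.symm j : V)} : Set V)) = ↑T := by
    ext x
    simp only [Set.iUnion_singleton_eq_range, Set.mem_range]
    constructor
    · rintro ⟨j, rfl⟩; exact (T.equivFin.symm j).2
    · intro hx; exact ⟨T.equivFin ⟨x, hx⟩, by simp⟩
  have hdisjf : Pairwise fun i j => Disjoint (f i) (f j) := by
    rintro (a | b) (c | d) hij
    · exact hdisj (fun h => hij (congrArg Sum.inl h))
    · simp only [hf, Sum.elim_inl, Sum.elim_inr]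
      refine Set.disjoint_singleton_right.mpr fun hmem => ?_
      exact Set.disjoint_left.mp hd (huA ▸ Set.mem_iUnion.mpr ⟨a, hmem⟩)
        (T.equivFin.symm d).2
    · simp only [hf, Sum.elim_inl, Sum.elim_inr]
      refine Set.disjoint_singleton_left.mpr fun hmem => ?_
      exact Set.disjoint_left.mp hd (huA ▸ Set.mem_iUnion.mpr ⟨c, hmem⟩)
        (T.equivFin.symm b).2
    · simp only [hf, Sum.elim_inr]
      refine Set.disjoint_singleton.mpr fun heq => hij ?_
      have h2 : T.equivFin.symm b = T.equivFin.symm d := Subtype.ext heq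
      have := congrArg T.equivFin h2
      simp only [Equiv.apply_symm_apply] at this
      exact congrArg Sum.inr this
  refine ⟨fun i => f (finSumFinEquiv.symm i), ?_, ?_, ?_, ?_⟩
  · intro i
    simp only
    rcases h : finSumFinEquiv.symm i with a | b <;>
      simp only [hf, Sum.elim_inl, Sum.elim_inr]
    · exact hne a
    · exact Set.singleton_nonempty _
  · intro i j hij
    exact hdisjf (fun h => hij (by simpa using congrArg finSumFinEquiv h))
  · rw [finSumFinEquiv.symm.surjective.iUnion_comp f, Set.iUnion_sum]
    simp only [hf, Sum.elim_inl, Sum.elim_inr]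
    rw [huA, hsingT]
  · intro i
    simp only
    rcases h : finSumFinEquiv.symm i with a | b <;>
      simp only [hf, Sum.elim_inl, Sum.elim_inr]
    · exact hpath a
    · exact inducesPath_singleton G _

lemma isPathCoverOn_exists {V : Type*} [Fintype V] (G : SimpleGraph V) (A : Set V) :
    ∃ p, IsPathCoverOn G A p := by
  classical
  refine ⟨A.toFinset.card, fun i => {(A.toFinset.equivFin.symm i : V)}, fun i =>
    Set.singleton_nonempty _, ?_, ?_, fun i => inducesPath_singleton G _⟩
  · intro i j hij
    refine Set.disjoint_singleton.mpr fun heq => hij ?_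
    have : A.toFinset.equivFin.symm i = A.toFinset.equivFin.symm j := Subtype.ext heq
    simpa using congrArg A.toFinset.equivFin this
  · ext x
    simp only [Set.iUnion_singleton_eq_range, Set.mem_range]
    constructor
    · rintro ⟨j, rfl⟩
      exact Set.mem_toFinset.mp (A.toFinset.equivFin.symm j).2
    · intro hx
      exact ⟨A.toFinset.equivFin ⟨x, Set.mem_toFinset.mpr hx⟩, by simp⟩

theorem subset_of_optimal_is_optimal {V : Type*} [Fintype V] (G : SimpleGraph V)
    (S : Finset V) (hS : (G.induce ((↑S : Set V)ᶜ)).IsAcyclic)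
    (hopt : Tplus G = pathCoverNumber (G.induce ((↑S : Set V)ᶜ)) + S.card)
    (S' : Finset V) (hsub : S' ⊆ S)
    (hS' : (G.induce ((↑S' : Set V)ᶜ)).IsAcyclic) :
    Tplus G = pathCoverNumber (G.induce ((↑S' : Set V)ᶜ)) + S'.card :=  by
  classical
  have hTle : Tplus G ≤ pathCoverNumber (G.induce ((↑S' : Set V)ᶜ)) + S'.card :=
    Nat.sInf_le ⟨S', hS', rfl⟩
  set T := S \ S' with hT
  have hunion : ((↑S : Set V)ᶜ) ∪ ↑T = ((↑S' : Set V)ᶜ) := by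
    ext x
    simp only [Set.mem_union, Set.mem_compl_iff, Finset.mem_coe, hT, Finset.mem_sdiff]
    constructor
    · rintro (h | ⟨_, h⟩) <;> [exact fun hx => h (hsub hx); exact h]
    · intro h
      by_cases hx : x ∈ S
      · exact Or.inr ⟨hx, h⟩
      · exact Or.inl hx
  have hdisjT : Disjoint ((↑S : Set V)ᶜ) (↑T : Set V) := by
    rw [Set.disjoint_left]
    intro x hx hxT
    exact hx (Finset.mem_coe.mpr (Finset.mem_sdiff.mp (Finset.mem_coe.mp hxT)).1)
  have hmemP : IsPathCoverOn G ((↑S : Set V)ᶜ) (pathCoverNumber (G.induce ((↑S : Set V)ᶜ))) := by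
    rw [pathCoverNumber_induce]
    exact Nat.sInf_mem (isPathCoverOn_exists G _)
  have cover' := isPathCoverOn_add G hmemP T hdisjT
  rw [hunion] at cover'
  have h2 : pathCoverNumber (G.induce ((↑S' : Set V)ᶜ)) ≤
      pathCoverNumber (G.induce ((↑S : Set V)ᶜ)) + T.card := by
    rw [pathCoverNumber_induce]
    exact Nat.sInf_le cover'
  have hcard : T.card + S'.card = S.card := Finset.card_sdiff_add_card_eq_card hsub
  omega
end
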